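/- Let G be a group, S a T_s-set of sequences in G with associated finest topology τ_S, and p : (G, τ_S) → (X, σ) a group homomorphism into a topological group. Then p is continuous if and only if p(u_n) converges to the identity of X for every sequence (u_n) ∈ S. -/

import Mathlib

open Filter Topology Pointwise

/-- `u` converges to the identity in the group topology `t`. -/
def TendstoOne {G : Type*} [Group G] (t : GroupTopology G) (u : ℕ → G) : Prop :=
  Filter.Tendsto u Filter.atTop (@nhds G t.toTopologicalSpace 1)

/-- The group topology `t` is Hausdorff. -/
def IsHausdorffGT {G : Type*} [Group G] (t : GroupTopology G) : Prop :=
  @T2Space G t.toTopologicalSpace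

/-- `S` is a `T_s`-set of sequences: some Hausdorff group topology makes every
sequence of `S` converge to the identity. -/
def IsTsSet {G : Type*} [Group G] (S : Set (ℕ → G)) : Prop :=
  ∃ t : GroupTopology G, IsHausdorffGT t ∧ ∀ u ∈ S, TendstoOne t u

/-- `τ` is the finest Hausdorff group topology on `G` in which every sequence of `S`
converges to the identity (recall that in Mathlib's order on topologies, finer = smaller). -/
def IsTauS {G : Type*} [Group G] (S : Set (ℕ → G)) (τ : GroupTopology G) : Prop :=
  IsHausdorffGT τ ∧ (∀ u ∈ S, TendstoOne τ u) ∧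
    ∀ t : GroupTopology G, IsHausdorffGT t → (∀ u ∈ S, TendstoOne t u) → τ ≤ t

/-- The given topological-group structure on `G`, as a term of `GroupTopology G`. -/
def ambientGT (G : Type*) [Group G] [τ : TopologicalSpace G] [h : IsTopologicalGroup G] :
    GroupTopology G := ⟨τ, h⟩

/-- The set of all sequences converging to the identity in a group topology. -/
def SeqConvOne {G : Type*} [Group G] (t : GroupTopology G) : Set (ℕ → G) :=
  {u | TendstoOne t u}

/-- `(G, τ)` is an `s`-group: its topology is the finest Hausdorff group topology in which
every member of some `T_s`-set of sequences converges to the identity. -/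
def IsSGroup (G : Type*) [Group G] [TopologicalSpace G] [IsTopologicalGroup G] [T2Space G] :
    Prop :=
  ∃ S : Set (ℕ → G), IsTauS S (ambientGT G)

def GroupTopology.induced {G X : Type*} [Group G] [Group X] [TopologicalSpace X]
    [IsTopologicalGroup X] (p : G →* X) : GroupTopology G :=
  ⟨TopologicalSpace.induced p ‹_›, topologicalGroup_induced p⟩

namespace GroupTopology

variable {G X : Type*} [Group G] [Group X] [TopologicalSpace X] [IsTopologicalGroup X]

theorem continuous_iff_le_induced {t : GroupTopology G} {p : G →* X} :
    Continuous[t.toTopologicalSpace, _] p ↔ t ≤ induced p :=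
  _root_.continuous_iff_le_induced.trans (toTopologicalSpace_le (y := induced p))

theorem tendstoOne_induced_iff {p : G →* X} {u : ℕ → G} :
    TendstoOne (induced p) u ↔ Tendsto (fun n => p (u n)) atTop (𝓝 1) := by
  rw [TendstoOne, induced, nhds_induced, tendsto_comap_iff, map_one]
  rfl

end GroupTopology

section TauS

variable {G : Type*} [Group G]

theorem TendstoOne.mono {t t' : GroupTopology G} {u : ℕ → G} (h : TendstoOne t u)
    (htt' : t ≤ t') : TendstoOne t' u :=
  h.mono_right (nhds_mono (GroupTopology.toTopologicalSpace_le.2 htt'))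

/-- `τ_S` is also finest among the group topologies that need not be Hausdorff: for such a `t`,
`τ_S ⊓ t` is Hausdorff and still makes every sequence of `S` converge. -/
theorem IsTauS.le_of_forall_tendstoOne {S : Set (ℕ → G)} {τ : GroupTopology G} (hτ : IsTauS S τ)
    {t : GroupTopology G} (ht : ∀ u ∈ S, TendstoOne t u) : τ ≤ t := by
  obtain ⟨hT2, hS, hfinest⟩ := hτ
  have hT2_inf : IsHausdorffGT (τ ⊓ t) := by
    unfold IsHausdorffGT
    rw [GroupTopology.toTopologicalSpace_inf]
    exact t2Space_antitone inf_le_left hT2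
  have hS_inf : ∀ u ∈ S, TendstoOne (τ ⊓ t) u := fun u hu => by
    unfold TendstoOne
    rw [GroupTopology.toTopologicalSpace_inf, nhds_inf, tendsto_inf]
    exact ⟨hS u hu, ht u hu⟩
  exact (hfinest _ hT2_inf hS_inf).trans inf_le_right

end TauS

/-- for a `T_s`-set `S` in `G` with finest topology `τ_S`, a homomorphism
`p : (G, τ_S) → (X, σ)` into a topological group is continuous iff `p (u n) → 1` in `X`
for every sequence `u ∈ S`. -/
theorem stmt4 {G X : Type*} [Group G] [Group X] [TopologicalSpace X] [IsTopologicalGroup X]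
    (S : Set (ℕ → G)) (τS : GroupTopology G) (hτS : IsTauS S τS) (p : G →* X) :
    @Continuous G X τS.toTopologicalSpace _ p ↔
      ∀ u ∈ S, Filter.Tendsto (fun n => p (u n)) Filter.atTop (nhds (1 : X)) := by
  rw [GroupTopology.continuous_iff_le_induced]
  constructor
  · exact fun hle u hu => GroupTopology.tendstoOne_induced_iff.1 ((hτS.2.1 u hu).mono hle)
  · exact fun hS => hτS.le_of_forall_tendstoOne fun u hu =>
      GroupTopology.tendstoOne_induced_iff.2 (hS u hu)
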